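/- (Derivative inequality in the proof of Theorem 7.1) Along the modified error dynamics with time-varying uncertainty and projection-based update law, for all t ≥ 0, d/dt V*(e(t), W̃(t), e_L(t), x̃(t)) ≤ −c₁ ‖e(t)‖₂² − c₂ ‖e_L(t)‖₂² − c₃ ‖x̃(t)‖₂² + c₄. -/

import Mathlib

open Matrix Filter

noncomputable section

/-- Euclidean norm ‖·‖₂ of a vector. -/
def norm2 {n : ℕ} (v : Fin n → ℝ) : ℝ := Real.sqrt (∑ i, v i ^ 2)

/-- Supremum (infinity) norm ‖·‖_∞ of a vector (the sup norm on `Fin n → ℝ`). -/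
def normInf {n : ℕ} (v : Fin n → ℝ) : ℝ := ‖v‖

/-- Frobenius norm ‖·‖_F of a matrix. -/
def normF {N m : ℕ} (W : Matrix (Fin N) (Fin m) ℝ) : ℝ := Real.sqrt (∑ i, ∑ j, W i j ^ 2)

/-- Smallest eigenvalue λ_min of a real symmetric (Hermitian) matrix. -/
def lamMin {n : ℕ} {A : Matrix (Fin n) (Fin n) ℝ} (hA : A.IsHermitian) : ℝ := ⨅ i, hA.eigenvalues i

/-- Largest eigenvalue λ_max of a real symmetric (Hermitian) matrix. -/
def lamMax {n : ℕ} {A : Matrix (Fin n) (Fin n) ℝ} (hA : A.IsHermitian) : ℝ := ⨆ i, hA.eigenvalues i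

/-- A real square matrix is Hurwitz if every (complex) eigenvalue has negative real part. -/
def Hurwitz {n : ℕ} (A : Matrix (Fin n) (Fin n) ℝ) : Prop :=
  ∀ μ : ℂ, (A.map Complex.ofReal).charpoly.IsRoot μ → μ.re < 0

/-- The Lyapunov function V(e, W̃) = eᵀ P e + γ⁻¹ tr((W̃ Λ^{1/2})ᵀ (W̃ Λ^{1/2})). -/
def Vlyap {n N m : ℕ} (γ : ℝ) (P : Matrix (Fin n) (Fin n) ℝ)
    (Lhalf : Matrix (Fin m) (Fin m) ℝ) (e : Fin n → ℝ) (W : Matrix (Fin N) (Fin m) ℝ) : ℝ :=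
  e ⬝ᵥ (P *ᵥ e) + γ⁻¹ * ((W * Lhalf)ᵀ * (W * Lhalf)).trace

/-- The augmented Lyapunov function V* of Theorem 5.1. -/
def Vstar {n N m : ℕ} (γ κ η ξ : ℝ) (P R : Matrix (Fin n) (Fin n) ℝ)
    (hP : P.IsHermitian) (hR : R.IsHermitian)
    (Lhalf : Matrix (Fin m) (Fin m) ℝ)
    (e : Fin n → ℝ) (W : Matrix (Fin N) (Fin m) ℝ) (eL xt : Fin n → ℝ) : ℝ :=
  Vlyap γ P Lhalf e W + η⁻¹ * κ * (eL ⬝ᵥ (P *ᵥ eL))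
    + 2 * ξ * κ⁻¹ * (lamMax hP)⁻¹ * lamMin hR * (xt ⬝ᵥ (P *ᵥ xt))

/-!
Along the flow, the Lyapunov equation turns the derivative of each quadratic term `vᵀ P v`
into `-vᵀ R v` plus a cross term. The projection property lets the weight-update term cancel
the uncertainty term `2 eᵀ P B Λ W̃ᵀ σ`, leaving only the drift `-2 γ⁻¹ tr(Λ W̃ᵀ Ẇ)`, which
Cauchy–Schwarz for the Frobenius norm bounds by `c₄`. The modification terms of `ė` and `ė_L`
add up to `-2 κ (e - e_L)ᵀ P (e - e_L)`, which absorbs the cross term of `x̃` by Young's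
inequality; the weight `2 ξ κ⁻¹ λ_max(P)⁻¹ λ_min(R)` of `x̃` in `V*` is chosen so that Young
costs exactly the fraction `ξ` of `-λ_min(R) ‖x̃‖²`.
-/

section Calculus

variable {ι ι' : Type*} [Fintype ι] {t : ℝ}

theorem HasDerivAt.dotProduct {f g : ℝ → ι → ℝ} {f' g' : ι → ℝ}
    (hf : HasDerivAt f f' t) (hg : HasDerivAt g g' t) :
    HasDerivAt (fun s => f s ⬝ᵥ g s) (f' ⬝ᵥ g t + f t ⬝ᵥ g') t := by
  refine (HasDerivAt.fun_sum (u := Finset.univ) fun i _ =>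
    (hasDerivAt_pi.1 hf i).mul (hasDerivAt_pi.1 hg i)).congr_deriv ?_
  rw [Finset.sum_add_distrib]
  rfl

theorem HasDerivAt.mulVec (A : Matrix ι' ι ℝ) {f : ℝ → ι → ℝ} {f' : ι → ℝ}
    (hf : HasDerivAt f f' t) : HasDerivAt (fun s => A *ᵥ f s) (A *ᵥ f') t :=
  hasDerivAt_pi.2 fun i =>
    ((hasDerivAt_const t (A i)).dotProduct hf).congr_deriv (by rw [zero_dotProduct, zero_add]; rfl)

theorem HasDerivAt.dotProduct_mulVec_self {P : Matrix ι ι ℝ} (hP : P.IsSymm)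
    {f : ℝ → ι → ℝ} {f' : ι → ℝ} (hf : HasDerivAt f f' t) :
    HasDerivAt (fun s => f s ⬝ᵥ (P *ᵥ f s)) (2 * (f t ⬝ᵥ (P *ᵥ f'))) t := by
  convert hf.dotProduct (hf.mulVec P) using 1
  rw [two_mul, dotProduct_mulVec, ← mulVec_transpose, hP.eq, dotProduct_comm]

theorem hasDerivAt_trace_transpose_mul_self [Fintype ι'] {M : ℝ → Matrix ι ι' ℝ}
    {M' : Matrix ι ι' ℝ} (hM : ∀ i j, HasDerivAt (fun s => M s i j) (M' i j) t) :
    HasDerivAt (fun s => ((M s)ᵀ * M s).trace) (2 * ((M t)ᵀ * M').trace) t := by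
  have hcol : ∀ j, HasDerivAt (fun s i => M s i j) (fun i => M' i j) t :=
    fun j => hasDerivAt_pi.2 fun i => hM i j
  refine (HasDerivAt.fun_sum (u := Finset.univ) fun j _ =>
    (hcol j).dotProduct (hcol j)).congr_deriv ?_
  simp only [dotProduct_comm (fun i => M' i _), ← two_mul, ← Finset.mul_sum]
  rfl

end Calculus

section QuadraticForm

variable {ι : Type*} [Fintype ι] {P : Matrix ι ι ℝ}

theorem Matrix.IsSymm.dotProduct_mulVec_comm (hP : P.IsSymm) (a b : ι → ℝ) :
    a ⬝ᵥ (P *ᵥ b) = b ⬝ᵥ (P *ᵥ a) := by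
  rw [dotProduct_mulVec, ← mulVec_transpose, hP.eq, dotProduct_comm]

theorem two_mul_dotProduct_mulVec_of_lyapunov {A R : Matrix ι ι ℝ} (hP : P.IsSymm)
    (hLyap : Aᵀ * P + P * A + R = 0) (v : ι → ℝ) :
    2 * (v ⬝ᵥ (P *ᵥ (A *ᵥ v))) = -(v ⬝ᵥ (R *ᵥ v)) := by
  have h := congrArg (fun M => v ⬝ᵥ (M *ᵥ v)) hLyap
  simp only [add_mulVec, ← mulVec_mulVec, dotProduct_add, zero_mulVec, dotProduct_zero] at h
  rw [dotProduct_mulVec v Aᵀ, vecMul_transpose, hP.dotProduct_mulVec_comm (A *ᵥ v)] at h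
  linarith

theorem Matrix.PosSemidef.two_mul_mul_dotProduct_mulVec_le (hP : P.PosSemidef) (ε : ℝ)
    (a b : ι → ℝ) :
    2 * ε * (a ⬝ᵥ (P *ᵥ b)) ≤ ε ^ 2 * (a ⬝ᵥ (P *ᵥ a)) + b ⬝ᵥ (P *ᵥ b) := by
  have h := hP.dotProduct_mulVec_nonneg (ε • a - b)
  simp only [star_trivial, mulVec_sub, mulVec_smul, dotProduct_sub, sub_dotProduct,
    dotProduct_smul, smul_dotProduct, smul_eq_mul,
    (isHermitian_iff_isSymm.1 hP.isHermitian).dotProduct_mulVec_comm b a] at h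
  linarith

end QuadraticForm

section Eigenvalues

theorem Matrix.IsHermitian.exists_dotProduct_mulVec_eq_sum {ι : Type*} [Fintype ι]
    [DecidableEq ι] {A : Matrix ι ι ℝ} (hA : A.IsHermitian) (x : ι → ℝ) :
    ∃ y : ι → ℝ, ∑ i, y i ^ 2 = ∑ i, x i ^ 2 ∧
      x ⬝ᵥ (A *ᵥ x) = ∑ i, hA.eigenvalues i * y i ^ 2 := by
  set U : Matrix ι ι ℝ := (hA.eigenvectorUnitary : Matrix ι ι ℝ)
  have hUU : U * Uᵀ = 1 := by
    simpa only [star_trivial, star_eq_conjTranspose, conjTranspose_eq_transpose_of_trivial]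
      using (mem_unitaryGroup_iff.1 hA.eigenvectorUnitary.2)
  refine ⟨Uᵀ *ᵥ x, ?_, ?_⟩
  · have h : (Uᵀ *ᵥ x) ⬝ᵥ (Uᵀ *ᵥ x) = x ⬝ᵥ x := by
      rw [dotProduct_mulVec, vecMul_transpose, mulVec_mulVec, hUU, one_mulVec]
    simpa only [dotProduct, sq] using h
  · have hspec : A = U * diagonal hA.eigenvalues * Uᵀ := by
      conv_lhs => rw [hA.spectral_theorem, Unitary.conjStarAlgAut_apply]
      rfl
    conv_lhs => rw [hspec]
    rw [← mulVec_mulVec, ← mulVec_mulVec, dotProduct_mulVec, ← mulVec_transpose]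
    simp only [dotProduct, mulVec_diagonal, sq]
    exact Finset.sum_congr rfl fun i _ => by ring

variable {n : ℕ} {A : Matrix (Fin n) (Fin n) ℝ}

theorem norm2_sq (x : Fin n → ℝ) : norm2 x ^ 2 = ∑ i, x i ^ 2 :=
  Real.sq_sqrt (Finset.sum_nonneg fun _ _ => sq_nonneg _)

theorem lamMin_mul_norm2_sq_le (hA : A.IsHermitian) (x : Fin n → ℝ) :
    lamMin hA * norm2 x ^ 2 ≤ x ⬝ᵥ (A *ᵥ x) := by
  obtain ⟨y, hy, hxy⟩ := hA.exists_dotProduct_mulVec_eq_sum x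
  rw [hxy, norm2_sq, ← hy, Finset.mul_sum]
  exact Finset.sum_le_sum fun i _ => mul_le_mul_of_nonneg_right
    (ciInf_le (Set.finite_range _).bddBelow i) (sq_nonneg _)

theorem dotProduct_mulVec_le_lamMax_mul_norm2_sq (hA : A.IsHermitian) (x : Fin n → ℝ) :
    x ⬝ᵥ (A *ᵥ x) ≤ lamMax hA * norm2 x ^ 2 := by
  obtain ⟨y, hy, hxy⟩ := hA.exists_dotProduct_mulVec_eq_sum x
  rw [hxy, norm2_sq, ← hy, Finset.mul_sum]
  exact Finset.sum_le_sum fun i _ => mul_le_mul_of_nonneg_right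
    (le_ciSup (Set.finite_range _).bddAbove i) (sq_nonneg _)

theorem lamMin_pos (hn : 0 < n) (hA : A.PosDef) : 0 < lamMin hA.1 := by
  have : Nonempty (Fin n) := ⟨⟨0, hn⟩⟩
  obtain ⟨i, hi⟩ := exists_eq_ciInf_of_finite (f := hA.1.eigenvalues)
  rw [lamMin, ← hi]
  exact hA.eigenvalues_pos i

theorem lamMax_pos (hn : 0 < n) (hA : A.PosDef) : 0 < lamMax hA.1 :=
  (hA.eigenvalues_pos ⟨0, hn⟩).trans_le (le_ciSup (Set.finite_range _).bddAbove _)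

end Eigenvalues

section Frobenius

variable {k m p : ℕ}

theorem normF_nonneg (A : Matrix (Fin k) (Fin m) ℝ) : 0 ≤ normF A :=
  Real.sqrt_nonneg _

section
attribute [local instance] Matrix.frobeniusSeminormedAddCommGroup

theorem normF_eq_frobenius_norm (A : Matrix (Fin k) (Fin m) ℝ) : normF A = ‖A‖ := by
  simp only [normF, frobenius_norm_def, Real.norm_eq_abs, Real.rpow_two, sq_abs,
    Real.sqrt_eq_rpow, one_div]

theorem normF_mul_le (A : Matrix (Fin k) (Fin m) ℝ) (B : Matrix (Fin m) (Fin p) ℝ) :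
    normF (A * B) ≤ normF A * normF B := by
  simpa only [normF_eq_frobenius_norm] using frobenius_norm_mul A B

theorem normF_transpose (A : Matrix (Fin k) (Fin m) ℝ) : normF Aᵀ = normF A := by
  simpa only [normF_eq_frobenius_norm] using frobenius_norm_transpose A

theorem normF_neg (A : Matrix (Fin k) (Fin m) ℝ) : normF (-A) = normF A := by
  simpa only [normF_eq_frobenius_norm] using norm_neg A

end

theorem trace_mul_transpose_le_normF_mul_normF (A B : Matrix (Fin k) (Fin m) ℝ) :
    (A * Bᵀ).trace ≤ normF A * normF B := by
  have h := Real.sum_mul_le_sqrt_mul_sqrt Finset.univ (fun q : Fin k × Fin m => A q.1 q.2)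
    (fun q => B q.1 q.2)
  simp only [Fintype.sum_prod_type] at h
  exact h

end Frobenius

section ModelReferenceAdaptiveControl

variable {n N m : ℕ}

theorem hasDerivAt_Vstar (γ κ η ξ : ℝ) {P R : Matrix (Fin n) (Fin n) ℝ}
    (hP : P.IsHermitian) (hR : R.IsHermitian) (L : Matrix (Fin m) (Fin m) ℝ)
    {e eL x : ℝ → Fin n → ℝ} {W : ℝ → Matrix (Fin N) (Fin m) ℝ}
    {e' eL' x' : Fin n → ℝ} {W' : Matrix (Fin N) (Fin m) ℝ} {t : ℝ}
    (he : HasDerivAt e e' t) (hW : ∀ i j, HasDerivAt (fun s => W s i j) (W' i j) t)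
    (heL : HasDerivAt eL eL' t) (hx : HasDerivAt x x' t) :
    HasDerivAt (fun s => Vstar γ κ η ξ P R hP hR L (e s) (W s) (eL s) (x s))
      (2 * (e t ⬝ᵥ (P *ᵥ e')) + γ⁻¹ * (2 * ((W t * L)ᵀ * (W' * L)).trace)
        + η⁻¹ * κ * (2 * (eL t ⬝ᵥ (P *ᵥ eL')))
        + 2 * ξ * κ⁻¹ * (lamMax hP)⁻¹ * lamMin hR * (2 * (x t ⬝ᵥ (P *ᵥ x')))) t := by
  have hPs : P.IsSymm := isHermitian_iff_isSymm.1 hP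
  have hWL : ∀ i j, HasDerivAt (fun s => (W s * L) i j) ((W' * L) i j) t :=
    fun i j => HasDerivAt.fun_sum (u := Finset.univ) fun k _ => (hW i k).mul_const (L k j)
  exact (((he.dotProduct_mulVec_self hPs).add
    ((hasDerivAt_trace_transpose_mul_self hWL).const_mul γ⁻¹)).add
    ((heL.dotProduct_mulVec_self hPs).const_mul (η⁻¹ * κ))).add
    ((hx.dotProduct_mulVec_self hPs).const_mul _)

theorem trace_transpose_mul_mul_of_isSymm {L : Matrix (Fin m) (Fin m) ℝ} (hL : L.IsSymm)
    (W X : Matrix (Fin N) (Fin m) ℝ) :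
    ((W * L)ᵀ * (X * L)).trace = (L * L * (Wᵀ * X)).trace := by
  rw [transpose_mul, hL.eq, ← Matrix.mul_assoc, trace_mul_comm]
  simp only [Matrix.mul_assoc]

theorem trace_mul_le_of_projection {P : Matrix (Fin n) (Fin n) ℝ} {B : Matrix (Fin n) (Fin m) ℝ}
    {Lam : Matrix (Fin m) (Fin m) ℝ} {W U : Matrix (Fin N) (Fin m) ℝ} {e : Fin n → ℝ}
    {σ : Fin N → ℝ} (hproj : ((Lam * Wᵀ) * (U - vecMulVec σ (e ᵥ* (P * B)))).trace ≤ 0) :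
    (Lam * (Wᵀ * U)).trace ≤ e ⬝ᵥ (P *ᵥ ((B * Lam * Wᵀ) *ᵥ σ)) := by
  rw [Matrix.mul_sub, trace_sub, sub_nonpos, mul_vecMulVec, trace_vecMulVec, dotProduct_comm,
    ← dotProduct_mulVec, mulVec_mulVec] at hproj
  rw [mulVec_mulVec]
  simpa only [Matrix.mul_assoc] using hproj

theorem weight_terms_le {P : Matrix (Fin n) (Fin n) ℝ} {B : Matrix (Fin n) (Fin m) ℝ}
    {Lam L : Matrix (Fin m) (Fin m) ℝ} (hL : L.IsSymm) (hLL : L * L = Lam) {γ : ℝ} (hγ : 0 < γ)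
    {W U W' : Matrix (Fin N) (Fin m) ℝ} {e : Fin n → ℝ} {σ : Fin N → ℝ} {w w' : ℝ}
    (hW : normF W ≤ w) (hW' : normF W' ≤ w')
    (hproj : ((Lam * Wᵀ) * (U - vecMulVec σ (e ᵥ* (P * B)))).trace ≤ 0) :
    -(2 * (e ⬝ᵥ (P *ᵥ ((B * Lam * Wᵀ) *ᵥ σ))))
        + γ⁻¹ * (2 * ((W * L)ᵀ * ((γ • U - W') * L)).trace)
      ≤ 2 * γ⁻¹ * normF Lam * w * w' := by
  have hU := trace_mul_le_of_projection hproj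
  have hdrift : -(Lam * (Wᵀ * W')).trace ≤ normF Lam * (w * w') :=
    calc -(Lam * (Wᵀ * W')).trace = (-Lam * (W'ᵀ * W)ᵀ).trace := by
          rw [transpose_mul, transpose_transpose, Matrix.neg_mul, trace_neg]
      _ ≤ normF (-Lam) * normF (W'ᵀ * W) := trace_mul_transpose_le_normF_mul_normF _ _
      _ ≤ normF Lam * (normF W * normF W') := by
          rw [normF_neg, mul_comm (normF W), ← normF_transpose W']
          exact mul_le_mul_of_nonneg_left (normF_mul_le _ _) (normF_nonneg _)
      _ ≤ normF Lam * (w * w') := mul_le_mul_of_nonneg_left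
          (mul_le_mul hW hW' (normF_nonneg _) ((normF_nonneg _).trans hW)) (normF_nonneg _)
  rw [trace_transpose_mul_mul_of_isSymm hL, hLL, Matrix.mul_sub, Matrix.mul_smul, Matrix.mul_sub,
    trace_sub, Matrix.mul_smul, trace_smul, smul_eq_mul]
  have hscaled := mul_le_mul_of_nonneg_left hdrift (inv_pos.2 hγ).le
  have hγ' : γ⁻¹ * γ = 1 := inv_mul_cancel₀ hγ.ne'
  linear_combination 2 * hU + 2 * hscaled + 2 * (Lam * (Wᵀ * U)).trace * hγ'

theorem modification_terms_le {P R : Matrix (Fin n) (Fin n) ℝ} (hP : P.PosSemidef)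
    (hR : R.IsHermitian) {c κ ξ : ℝ} (hc : 0 ≤ c) (hκ : 0 ≤ κ)
    (hcκ : c * κ * lamMax hP.isHermitian = 2 * ξ * lamMin hR) (x d : Fin n → ℝ) :
    c * (-(x ⬝ᵥ (R *ᵥ x)) + 2 * κ * (x ⬝ᵥ (P *ᵥ d))) - 2 * κ * (d ⬝ᵥ (P *ᵥ d))
      ≤ -(c * lamMin hR * (1 - ξ) * norm2 x ^ 2) := by
  have hYoung := mul_le_mul_of_nonneg_left (hP.two_mul_mul_dotProduct_mulVec_le (c / 2) x d)
    (by positivity : (0 : ℝ) ≤ 2 * κ)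
  have hPx := mul_le_mul_of_nonneg_left (dotProduct_mulVec_le_lamMax_mul_norm2_sq hP.isHermitian x)
    (by positivity : (0 : ℝ) ≤ c ^ 2 * κ / 2)
  have hRx := mul_le_mul_of_nonneg_left (lamMin_mul_norm2_sq_le hR x) hc
  linear_combination hRx + hYoung + hPx + c / 2 * norm2 x ^ 2 * hcκ

end ModelReferenceAdaptiveControl

theorem statement15_general
    {n N m : ℕ} (hn : 0 < n)
    (Ar : Matrix (Fin n) (Fin n) ℝ) (B : Matrix (Fin n) (Fin m) ℝ)
    (Lam Lhalf : Matrix (Fin m) (Fin m) ℝ) (R P : Matrix (Fin n) (Fin n) ℝ)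
    (hLhalfDiag : Lhalf.IsDiag) (hLhalfSq : Lhalf * Lhalf = Lam)
    (hR : R.PosDef) (hP : P.PosDef)
    (hLyap : Arᵀ * P + P * Ar + R = 0)
    (γ κ η ξ : ℝ) (hγ : 0 < γ) (hκ : 0 < κ) (hη : 0 < η) (hξ0 : 0 < ξ)
    (σx : ℝ → Fin N → ℝ)
    (Wdot Wt U : ℝ → Matrix (Fin N) (Fin m) ℝ)
    (wdotmax wtilmax : ℝ)
    (hWdotbnd : ∀ t ≥ (0:ℝ), normF (Wdot t) ≤ wdotmax)
    (hWtbnd : ∀ t ≥ (0:ℝ), normF (Wt t) ≤ wtilmax)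
    (e eL xt : ℝ → Fin n → ℝ)
    (he : ∀ t ≥ (0:ℝ), HasDerivAt e
          (Ar *ᵥ e t - (B * Lam * (Wt t)ᵀ) *ᵥ σx t - κ • (e t - eL t)) t)
    (heL : ∀ t ≥ (0:ℝ), HasDerivAt eL (Ar *ᵥ eL t + η • (e t - eL t)) t)
    (hxt : ∀ t ≥ (0:ℝ), HasDerivAt xt (Ar *ᵥ xt t + κ • (e t - eL t)) t)
    (hWt : ∀ t ≥ (0:ℝ), ∀ i j, HasDerivAt (fun s => Wt s i j)
          (γ * U t i j - Wdot t i j) t)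
    (hUproj : ∀ t ≥ (0:ℝ),
      ((Lam * (Wt t)ᵀ) * (U t - vecMulVec (σx t) ((e t) ᵥ* (P * B)))).trace ≤ 0)
    : ∀ t ≥ (0:ℝ),
      deriv (fun s => Vstar γ κ η ξ P R hP.1 hR.1 Lhalf (e s) (Wt s) (eL s) (xt s)) t
        ≤ -(lamMin hR.1) * norm2 (e t) ^ 2
          - η⁻¹ * κ * lamMin hR.1 * norm2 (eL t) ^ 2
          - 2 * ξ * κ⁻¹ * lamMin hR.1 ^ 2 * (lamMax hP.1)⁻¹ * (1 - ξ) * norm2 (xt t) ^ 2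
          + 2 * γ⁻¹ * normF Lam * wtilmax * wdotmax := by
  intro t ht
  have hPs : P.IsSymm := isHermitian_iff_isSymm.1 hP.1
  rw [(hasDerivAt_Vstar γ κ η ξ hP.1 hR.1 Lhalf (he t ht) (W' := γ • U t - Wdot t) (hWt t ht)
    (heL t ht) (hxt t ht)).deriv]
  have hweight := weight_terms_le hLhalfDiag.isSymm hLhalfSq hγ (hWtbnd t ht) (hWdotbnd t ht)
    (hUproj t ht)
  have hRpos := lamMin_pos hn hR
  have hPpos := lamMax_pos hn hP
  have hmod := modification_terms_le hP.posSemidef hR.1 (ξ := ξ)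
    (c := 2 * ξ * κ⁻¹ * (lamMax hP.1)⁻¹ * lamMin hR.1) (by positivity) hκ.le (by field_simp)
    (xt t) (e t - eL t)
  have hlyap := two_mul_dotProduct_mulVec_of_lyapunov hPs hLyap
  have he2 := lamMin_mul_norm2_sq_le hR.1 (e t)
  have heL2 := mul_le_mul_of_nonneg_left (lamMin_mul_norm2_sq_le hR.1 (eL t))
    (by positivity : 0 ≤ η⁻¹ * κ)
  have hη' : η⁻¹ * η = 1 := inv_mul_cancel₀ hη.ne'
  simp only [mulVec_add, mulVec_sub, mulVec_smul, dotProduct_add, dotProduct_sub,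
    dotProduct_smul, sub_dotProduct, smul_eq_mul] at hweight hmod ⊢
  linear_combination hweight + hmod + hlyap (e t) + η⁻¹ * κ * hlyap (eL t)
    + 2 * ξ * κ⁻¹ * (lamMax hP.1)⁻¹ * lamMin hR.1 * hlyap (xt t) + he2 + heL2
    + 2 * κ * (eL t ⬝ᵥ (P *ᵥ e t) - eL t ⬝ᵥ (P *ᵥ eL t)) * hη'

theorem statement15
    {n N m : ℕ} (hn : 0 < n) (hN : 0 < N) (hm : 0 < m)
    (Ar : Matrix (Fin n) (Fin n) ℝ) (B : Matrix (Fin n) (Fin m) ℝ)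
    (Lam Lhalf : Matrix (Fin m) (Fin m) ℝ) (R P : Matrix (Fin n) (Fin n) ℝ)
    (hAr : Hurwitz Ar)
    (hLam : Lam.PosDef) (hLamDiag : Lam.IsDiag)
    (hLhalfDiag : Lhalf.IsDiag) (hLhalfSq : Lhalf * Lhalf = Lam)
    (hR : R.PosDef) (hP : P.PosDef)
    (hLyap : Arᵀ * P + P * Ar + R = 0)
    (γ κ η ξ : ℝ) (hγ : 0 < γ) (hκ : 0 < κ) (hη : 0 < η) (hξ0 : 0 < ξ) (hξ1 : ξ < 1)
    (σx : ℝ → Fin N → ℝ)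
    (W Wdot Wt U : ℝ → Matrix (Fin N) (Fin m) ℝ)
    (wdotmax wtilmax : ℝ)
    (hWder : ∀ t ≥ (0:ℝ), ∀ i j, HasDerivAt (fun s => W s i j) (Wdot t i j) t)
    (hWdotbnd : ∀ t ≥ (0:ℝ), normF (Wdot t) ≤ wdotmax)
    (hWtbnd : ∀ t ≥ (0:ℝ), normF (Wt t) ≤ wtilmax)
    (e eL xt : ℝ → Fin n → ℝ)
    (heL0 : eL 0 = 0) (hxt0 : xt 0 = 0)
    (he : ∀ t ≥ (0:ℝ), HasDerivAt e
          (Ar *ᵥ e t - (B * Lam * (Wt t)ᵀ) *ᵥ σx t - κ • (e t - eL t)) t)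
    (heL : ∀ t ≥ (0:ℝ), HasDerivAt eL (Ar *ᵥ eL t + η • (e t - eL t)) t)
    (hxt : ∀ t ≥ (0:ℝ), HasDerivAt xt (Ar *ᵥ xt t + κ • (e t - eL t)) t)
    (hWt : ∀ t ≥ (0:ℝ), ∀ i j, HasDerivAt (fun s => Wt s i j)
          (γ * U t i j - Wdot t i j) t)
    (hUproj : ∀ t ≥ (0:ℝ),
      ((Lam * (Wt t)ᵀ) * (U t - vecMulVec (σx t) ((e t) ᵥ* (P * B)))).trace ≤ 0)
    : ∀ t ≥ (0:ℝ),
      deriv (fun s => Vstar γ κ η ξ P R hP.1 hR.1 Lhalf (e s) (Wt s) (eL s) (xt s)) t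
        ≤ -(lamMin hR.1) * norm2 (e t) ^ 2
          - η⁻¹ * κ * lamMin hR.1 * norm2 (eL t) ^ 2
          - 2 * ξ * κ⁻¹ * lamMin hR.1 ^ 2 * (lamMax hP.1)⁻¹ * (1 - ξ) * norm2 (xt t) ^ 2
          + 2 * γ⁻¹ * normF Lam * wtilmax * wdotmax :=
  statement15_general hn Ar B Lam Lhalf R P hLhalfDiag hLhalfSq hR hP hLyap γ κ η ξ hγ hκ hη hξ0 σx
    Wdot Wt U wdotmax wtilmax hWdotbnd hWtbnd e eL xt he heL hxt hWt hUproj
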